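/- arXiv:1712.09477 — 3 statements merged into one kernel-verified Lean document; each statement's English description precedes it below -/
import Mathlib

section
/- Let G be a finite simple connected graph whose set V₁ of degree-1 vertices is nonempty, say V₁ = {v₁,...,v_i}. Form the graph G ⊕ V₁' by adding new vertices v₁',...,v_i' and new edges v₁v₁',...,v_iv_i' (attaching one pendant edge to each leaf of G). If G is strongly antimagic, then G ⊕ V₁' is strongly antimagic. -/
open Classical

noncomputable section

/-- The vertex sum at `u` of an edge labeling `f`: the sum of the labels of the
edges incident to `u`. -/
def vertexSum {V : Type*} [Fintype V] (G : SimpleGraph V) (f : Sym2 V → ℕ) (u : V) : ℕ :=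
  ∑ e ∈ G.incidenceFinset u, f e

/-- `f` is an antimagic labeling of `G`: it is a bijection from the edge set of `G`
onto `{1, …, |E|}` and the vertex sums are pairwise distinct. -/
def IsAntimagicLabeling {V : Type*} [Fintype V] (G : SimpleGraph V)
    (f : Sym2 V → ℕ) : Prop :=
  Set.BijOn f G.edgeSet (Set.Icc 1 G.edgeFinset.card) ∧
  Function.Injective (vertexSum G f)

/-- `f` is a strongly antimagic labeling of `G`: it is an antimagic labeling and moreover
`deg u < deg v` implies `vertexSum u < vertexSum v`. -/
def IsStronglyAntimagicLabeling {V : Type*} [Fintype V] (G : SimpleGraph V)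
    (f : Sym2 V → ℕ) : Prop :=
  Set.BijOn f G.edgeSet (Set.Icc 1 G.edgeFinset.card) ∧
  Function.Injective (vertexSum G f) ∧
  ∀ u v : V, G.degree u < G.degree v → vertexSum G f u < vertexSum G f v

/-- `G` is antimagic if it admits an antimagic labeling. -/
def IsAntimagic {V : Type*} [Fintype V] (G : SimpleGraph V) : Prop :=
  ∃ f : Sym2 V → ℕ, IsAntimagicLabeling G f

/-- `G` is strongly antimagic if it admits a strongly antimagic labeling. -/
def IsStronglyAntimagic {V : Type*} [Fintype V] (G : SimpleGraph V) : Prop :=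
  ∃ f : Sym2 V → ℕ, IsStronglyAntimagicLabeling G f

/-- `G ⊕ V₁'`: the graph obtained from `G` by adding, for each vertex `v` of degree `1`,
a new vertex `v'` and a new pendant edge `v v'`. -/
def attachLeaves {V : Type*} [Fintype V] (G : SimpleGraph V) :
    SimpleGraph (V ⊕ {v : V // G.degree v = 1}) :=
  SimpleGraph.fromRel fun x y =>
    (∃ a b : V, x = Sum.inl a ∧ y = Sum.inl b ∧ G.Adj a b) ∨
    (∃ a : {v : V // G.degree v = 1}, x = Sum.inl a.1 ∧ y = Sum.inr a)


/-! Label an old edge `e` by `f e + ℓ`, where `ℓ` is the number of leaves of `G`, and the pendant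
edge at a leaf `v` by the rank of `φ_f(v)` among the vertex sums of the leaves. The new pendant
vertices then carry exactly the sums `1, …, ℓ`, while an old vertex of positive degree has sum at
least `(ℓ + 1) deg v > ℓ`. On old vertices the new sum `φ_f(v) + ℓ deg v (+ rank of v)` is strictly
increasing in `φ_f(v)`: since `f` is strongly antimagic, `φ_f(u) < φ_f(v)` forces
`deg u ≤ deg v`, and a difference in degree outweighs the rank, which is at most `ℓ`. -/

open Finset

section VertexSum

variable {W : Type*} [Fintype W] (G : SimpleGraph W) (f : Sym2 W → ℕ)

theorem incidenceFinset_eq_image_neighborFinset (u : W) :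
    G.incidenceFinset u = (G.neighborFinset u).image (s(u, ·)) := by
  ext e
  induction e with
  | _ x y =>
    simp only [SimpleGraph.mem_incidenceFinset, SimpleGraph.mk'_mem_incidenceSet_iff, mem_image,
      SimpleGraph.mem_neighborFinset]
    constructor
    · rintro ⟨hxy, rfl | rfl⟩
      exacts [⟨y, hxy, rfl⟩, ⟨x, hxy.symm, Sym2.eq_swap⟩]
    · rintro ⟨v, huv, h⟩
      rcases Sym2.eq_iff.1 h with ⟨rfl, rfl⟩ | ⟨rfl, rfl⟩
      exacts [⟨huv, Or.inl rfl⟩, ⟨huv.symm, Or.inr rfl⟩]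

theorem vertexSum_eq_sum_adj (u : W) :
    vertexSum G f u = ∑ v, if G.Adj u v then f s(u, v) else 0 := by
  rw [vertexSum, incidenceFinset_eq_image_neighborFinset, sum_image (by simp), ← sum_filter,
    SimpleGraph.neighborFinset_eq_filter]

theorem degree_eq_sum_adj (u : W) : G.degree u = ∑ v, if G.Adj u v then 1 else 0 := by
  rw [← SimpleGraph.card_neighborFinset_eq_degree, SimpleGraph.neighborFinset_eq_filter,
    card_filter]

theorem vertexSum_eq_zero_of_degree_eq_zero {u : W} (h : G.degree u = 0) :
    vertexSum G f u = 0 := by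
  rw [vertexSum, card_eq_zero.1 ((G.card_incidenceFinset_eq_degree u).trans h), sum_empty]

theorem degree_le_vertexSum {f : Sym2 W → ℕ} (hf : ∀ e ∈ G.edgeSet, 1 ≤ f e) (u : W) :
    G.degree u ≤ vertexSum G f u := by
  rw [degree_eq_sum_adj, vertexSum_eq_sum_adj]
  exact sum_le_sum fun v _ => by split_ifs with h; exacts [hf _ h, le_rfl]

end VertexSum

section Rank

variable {ι α : Type*} [Fintype ι] [LinearOrder α] {g : ι → α}

def rankBy (g : ι → α) (x : ι) : ℕ := #{y | g y ≤ g x}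

theorem rankBy_lt_rankBy {x y : ι} (h : g x < g y) : rankBy g x < rankBy g y := by
  refine card_lt_card ((ssubset_iff_of_subset fun z hz => ?_).2 ⟨y, by simp, by simpa using h⟩)
  simp only [mem_filter, mem_univ, true_and] at hz ⊢
  exact hz.trans h.le

theorem one_le_rankBy (x : ι) : 1 ≤ rankBy g x := card_pos.2 ⟨x, by simp⟩

theorem rankBy_le_card (x : ι) : rankBy g x ≤ Fintype.card ι := card_filter_le _ _

theorem rankBy_injective (hg : Function.Injective g) : Function.Injective (rankBy g) := by
  intro x y h
  by_contra hne
  rcases lt_or_gt_of_ne (hg.ne hne) with hlt | hlt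
  exacts [(rankBy_lt_rankBy hlt).ne h, (rankBy_lt_rankBy hlt).ne' h]

theorem bijOn_rankBy (hg : Function.Injective g) :
    Set.BijOn (rankBy g) Set.univ (Set.Icc 1 (Fintype.card ι)) := by
  have hinj := (rankBy_injective hg).injOn (s := Set.univ)
  have hsub : rankBy g '' Set.univ ⊆ Set.Icc 1 (Fintype.card ι) := by
    rintro _ ⟨x, -, rfl⟩
    exact ⟨one_le_rankBy x, rankBy_le_card x⟩
  have hcard : (Set.Icc 1 (Fintype.card ι)).ncard ≤ (rankBy g '' Set.univ).ncard := by
    rw [hinj.ncard_image, Set.ncard_univ, Nat.card_eq_fintype_card, Set.ncard_Icc_nat]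
    omega
  rw [← Set.eq_of_subset_of_ncard_le hsub hcard]
  exact hinj.bijOn_image

end Rank

theorem Fintype.sum_ite_val_eq {α M : Type*} [AddCommMonoid M] {p : α → Prop}
    [DecidablePred p] [DecidableEq α] [Fintype (Subtype p)] (g : Subtype p → M) (a : α) :
    (∑ w : Subtype p, if w.1 = a then g w else 0) = if h : p a then g ⟨a, h⟩ else 0 := by
  split_ifs with h
  · have key : ∀ w : Subtype p, w.1 = a ↔ w = ⟨a, h⟩ := fun w =>
      ⟨fun hw => Subtype.ext hw, fun hw => hw ▸ rfl⟩
    simp only [key, Finset.sum_ite_eq', Finset.mem_univ, if_true]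
  · exact Finset.sum_eq_zero fun w _ => if_neg fun hw : w.1 = a => h (hw ▸ w.2)

section AttachLeaves

variable {V : Type*} [Fintype V] (G : SimpleGraph V) (f : Sym2 V → ℕ)

local notation "L" => {v : V // G.degree v = 1}

@[simp]
theorem attachLeaves_adj_inl_inl {a b : V} :
    (attachLeaves G).Adj (.inl a) (.inl b) ↔ G.Adj a b := by
  simpa [attachLeaves, G.adj_comm b a] using G.ne_of_adj

@[simp]
theorem attachLeaves_adj_inl_inr {a : V} {w : L} :
    (attachLeaves G).Adj (.inl a) (.inr w) ↔ w.1 = a := by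
  obtain ⟨c, hc⟩ := w
  simp only [attachLeaves, SimpleGraph.fromRel_adj]
  aesop

@[simp]
theorem attachLeaves_adj_inr_inl {a : V} {w : L} :
    (attachLeaves G).Adj (.inr w) (.inl a) ↔ w.1 = a := by
  obtain ⟨c, hc⟩ := w
  simp only [attachLeaves, SimpleGraph.fromRel_adj]
  aesop

@[simp]
theorem attachLeaves_adj_inr_inr {w w' : L} : ¬(attachLeaves G).Adj (.inr w) (.inr w') := by
  simp [attachLeaves]

theorem edgeSet_attachLeaves : (attachLeaves G).edgeSet =
    Sym2.map Sum.inl '' G.edgeSet ∪ Set.range fun w : L => s(.inl w.1, .inr w) := by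
  apply Set.Subset.antisymm
  · intro e he
    induction e with
    | _ x y =>
      rcases x with a | w <;> rcases y with b | w' <;> simp only [SimpleGraph.mem_edgeSet,
        attachLeaves_adj_inl_inl, attachLeaves_adj_inl_inr, attachLeaves_adj_inr_inl,
        attachLeaves_adj_inr_inr] at he
      · exact .inl ⟨s(a, b), he, rfl⟩
      · exact .inr ⟨w', by simp [he]⟩
      · exact .inr ⟨w, by simp [he, Sym2.eq_swap]⟩
  · rintro _ (⟨e, he, rfl⟩ | ⟨w, rfl⟩)
    · induction e with
      | _ a b => simpa using he
    · simp

theorem degree_attachLeaves_inl (a : V) :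
    (attachLeaves G).degree (.inl a) = G.degree a + if G.degree a = 1 then 1 else 0 := by
  rw [degree_eq_sum_adj, Fintype.sum_sum_type]
  simp only [attachLeaves_adj_inl_inl, attachLeaves_adj_inl_inr, Fintype.sum_ite_val_eq,
    dite_eq_ite, ← degree_eq_sum_adj]

theorem degree_attachLeaves_inr (w : L) : (attachLeaves G).degree (.inr w) = 1 := by
  rw [degree_eq_sum_adj, Fintype.sum_sum_type]
  simp

abbrev leafRank : L → ℕ := rankBy fun w => vertexSum G f w.1

-- Only the values on edges of `attachLeaves G` matter; the pendant edge at a leaf `w` is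
-- `s(inl w.1, inr w)`.
def attachLabel : Sym2 (V ⊕ L) → ℕ :=
  Sym2.lift ⟨fun x y => match x, y with
    | .inl a, .inl b => f s(a, b) + Fintype.card L
    | .inl _, .inr w | .inr w, .inl _ => leafRank G f w
    | .inr _, .inr _ => 0, by rintro (a | w) (b | w') <;> simp [Sym2.eq_swap]⟩

@[simp]
theorem attachLabel_inl_inl (a b : V) :
    attachLabel G f s(.inl a, .inl b) = f s(a, b) + Fintype.card L := rfl

@[simp]
theorem attachLabel_inl_inr (a : V) (w : L) :
    attachLabel G f s(.inl a, .inr w) = leafRank G f w := rfl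

@[simp]
theorem attachLabel_inr_inl (a : V) (w : L) :
    attachLabel G f s(.inr w, .inl a) = leafRank G f w := rfl

theorem attachLabel_map_inl (e : Sym2 V) :
    attachLabel G f (e.map .inl) = f e + Fintype.card L := by
  induction e with
  | _ a b => rfl

theorem vertexSum_attachLabel_inl (a : V) :
    vertexSum (attachLeaves G) (attachLabel G f) (.inl a) = vertexSum G f a +
      Fintype.card L * G.degree a + if h : G.degree a = 1 then leafRank G f ⟨a, h⟩ else 0 := by
  simp only [vertexSum_eq_sum_adj G, vertexSum_eq_sum_adj (attachLeaves G), degree_eq_sum_adj G,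
    Fintype.sum_sum_type, attachLeaves_adj_inl_inl, attachLeaves_adj_inl_inr, attachLabel_inl_inl,
    attachLabel_inl_inr, Fintype.sum_ite_val_eq, ite_add_zero, sum_add_distrib, mul_sum, mul_ite,
    mul_one, mul_zero]

theorem vertexSum_attachLabel_inr (w : L) :
    vertexSum (attachLeaves G) (attachLabel G f) (.inr w) = leafRank G f w := by
  rw [vertexSum_eq_sum_adj, Fintype.sum_sum_type]
  simp

theorem vertexSum_attachLabel_inl_of_degree_eq_zero {a : V} (h : G.degree a = 0) :
    vertexSum (attachLeaves G) (attachLabel G f) (.inl a) = 0 := by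
  simp [vertexSum_attachLabel_inl, h, vertexSum_eq_zero_of_degree_eq_zero]

variable {G f}

theorem card_lt_vertexSum_attachLabel_inl (hf : Set.MapsTo f G.edgeSet (Set.Icc 1 #G.edgeFinset))
    {a : V} (h : 0 < G.degree a) :
    Fintype.card L < vertexSum (attachLeaves G) (attachLabel G f) (.inl a) := by
  have := degree_le_vertexSum G (fun e he => (hf he).1) a
  rw [vertexSum_attachLabel_inl]
  nlinarith

theorem vertexSum_attachLabel_inl_lt (hf : IsStronglyAntimagicLabeling G f) {a b : V}
    (h : vertexSum G f a < vertexSum G f b) :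
    vertexSum (attachLeaves G) (attachLabel G f) (.inl a) <
      vertexSum (attachLeaves G) (attachLabel G f) (.inl b) := by
  rw [vertexSum_attachLabel_inl, vertexSum_attachLabel_inl]
  have hdeg : G.degree a ≤ G.degree b := not_lt.1 fun hlt => (hf.2.2 b a hlt).asymm h
  rcases hdeg.lt_or_eq with hlt | heq
  · have hleaf : (if h : G.degree a = 1 then leafRank G f ⟨a, h⟩ else 0) ≤ Fintype.card L := by
      split_ifs
      exacts [rankBy_le_card _, Nat.zero_le _]
    have : Fintype.card L * (G.degree a + 1) ≤ Fintype.card L * G.degree b :=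
      Nat.mul_le_mul_left _ hlt
    rw [mul_add_one] at this
    linarith
  · have hmul : Fintype.card L * G.degree a = Fintype.card L * G.degree b := by rw [heq]
    by_cases h1 : G.degree a = 1
    · have hrank : leafRank G f ⟨a, h1⟩ < leafRank G f ⟨b, heq ▸ h1⟩ := rankBy_lt_rankBy h
      rw [dif_pos h1, dif_pos (heq ▸ h1)]
      omega
    · rw [dif_neg h1, dif_neg (heq ▸ h1)]
      omega

theorem bijOn_attachLabel (hf : Set.BijOn f G.edgeSet (Set.Icc 1 #G.edgeFinset))
    (hinj : Function.Injective (vertexSum G f)) :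
    Set.BijOn (attachLabel G f) (attachLeaves G).edgeSet
      (Set.Icc 1 (#G.edgeFinset + Fintype.card L)) := by
  have hrank : Set.BijOn (leafRank G f) Set.univ (Set.Icc 1 (Fintype.card L)) :=
    bijOn_rankBy (hinj.comp Subtype.val_injective)
  rw [edgeSet_attachLeaves]
  refine ⟨?_, ?_, ?_⟩
  · rintro _ (⟨e, he, rfl⟩ | ⟨w, rfl⟩)
    · have := hf.mapsTo he
      simp only [Set.mem_Icc, attachLabel_map_inl] at this ⊢
      omega
    · have := hrank.mapsTo (Set.mem_univ w)
      simp only [Set.mem_Icc, attachLabel_inl_inr] at this ⊢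
      omega
  · rintro _ (⟨e, he, rfl⟩ | ⟨w, rfl⟩) _ (⟨e', he', rfl⟩ | ⟨w', rfl⟩) h <;>
      simp only [attachLabel_map_inl, attachLabel_inl_inr] at h
    · rw [hf.injOn he he' (by omega)]
    · have := (hf.mapsTo he).1
      have : leafRank G f w' ≤ Fintype.card L := rankBy_le_card w'
      omega
    · have := (hf.mapsTo he').1
      have : leafRank G f w ≤ Fintype.card L := rankBy_le_card w
      omega
    · rw [hrank.injOn (Set.mem_univ w) (Set.mem_univ w') h]
  · rintro k ⟨hk1, hk2⟩
    by_cases hk : k ≤ Fintype.card L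
    · obtain ⟨w, -, rfl⟩ := hrank.surjOn ⟨hk1, hk⟩
      exact ⟨_, .inr ⟨w, rfl⟩, rfl⟩
    · obtain ⟨e, he, hfe⟩ := hf.surjOn (show k - Fintype.card L ∈ Set.Icc 1 #G.edgeFinset by
        constructor <;> omega)
      refine ⟨_, .inl ⟨e, he, rfl⟩, ?_⟩
      rw [attachLabel_map_inl, hfe]
      omega

theorem vertexSum_attachLabel_inl_ne_inr
    (hf : Set.MapsTo f G.edgeSet (Set.Icc 1 #G.edgeFinset)) (a : V) (w : L) :
    vertexSum (attachLeaves G) (attachLabel G f) (.inl a) ≠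
      vertexSum (attachLeaves G) (attachLabel G f) (.inr w) := by
  have h1 : 1 ≤ leafRank G f w := one_le_rankBy w
  have h2 : leafRank G f w ≤ Fintype.card L := rankBy_le_card w
  rw [vertexSum_attachLabel_inr]
  rcases (G.degree a).eq_zero_or_pos with h | h
  · rw [vertexSum_attachLabel_inl_of_degree_eq_zero G f h]
    omega
  · have := card_lt_vertexSum_attachLabel_inl hf h
    omega

theorem injective_vertexSum_attachLabel (hf : IsStronglyAntimagicLabeling G f) :
    Function.Injective (vertexSum (attachLeaves G) (attachLabel G f)) := by
  rintro (a | w) (b | w') h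
  · refine congrArg Sum.inl (hf.2.1 (le_antisymm ?_ ?_))
    exacts [not_lt.1 fun hlt => (vertexSum_attachLabel_inl_lt hf hlt).ne h.symm,
      not_lt.1 fun hlt => (vertexSum_attachLabel_inl_lt hf hlt).ne h]
  · exact absurd h (vertexSum_attachLabel_inl_ne_inr hf.1.mapsTo a w')
  · exact absurd h.symm (vertexSum_attachLabel_inl_ne_inr hf.1.mapsTo b w)
  · rw [vertexSum_attachLabel_inr, vertexSum_attachLabel_inr] at h
    exact congrArg Sum.inr (rankBy_injective (hf.2.1.comp Subtype.val_injective) h)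

theorem vertexSum_attachLabel_lt_of_degree_lt (hf : IsStronglyAntimagicLabeling G f)
    {x y : V ⊕ L} (h : (attachLeaves G).degree x < (attachLeaves G).degree y) :
    vertexSum (attachLeaves G) (attachLabel G f) x <
      vertexSum (attachLeaves G) (attachLabel G f) y := by
  rcases x with a | w <;> rcases y with b | w' <;>
    simp only [degree_attachLeaves_inl, degree_attachLeaves_inr] at h
  · exact vertexSum_attachLabel_inl_lt hf (hf.2.2 a b (by split_ifs at h <;> omega))
  · rw [vertexSum_attachLabel_inl_of_degree_eq_zero G f (by split_ifs at h <;> omega),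
      vertexSum_attachLabel_inr]
    exact one_le_rankBy w'
  · rw [vertexSum_attachLabel_inr]
    exact (rankBy_le_card w).trans_lt
      (card_lt_vertexSum_attachLabel_inl hf.1.mapsTo (by split_ifs at h <;> omega))
  · exact absurd h (lt_irrefl 1)

theorem isStronglyAntimagicLabeling_attachLabel (hf : IsStronglyAntimagicLabeling G f) :
    IsStronglyAntimagicLabeling (attachLeaves G) (attachLabel G f) := by
  have hbij := bijOn_attachLabel hf.1 hf.2.1
  have hcard : #(attachLeaves G).edgeFinset = #G.edgeFinset + Fintype.card L := by
    rw [← Set.ncard_coe_finset, SimpleGraph.coe_edgeFinset, hbij.ncard_eq, Set.ncard_Icc_nat]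
    omega
  exact ⟨hcard ▸ hbij, injective_vertexSum_attachLabel hf,
    fun _ _ => vertexSum_attachLabel_lt_of_degree_lt hf⟩

end AttachLeaves

theorem attachLeaves_isStronglyAntimagic_general {V : Type*} [Fintype V] (G : SimpleGraph V)
    (h : IsStronglyAntimagic G) :
    IsStronglyAntimagic (attachLeaves G) :=
  let ⟨f, hf⟩ := h
  ⟨attachLabel G f, isStronglyAntimagicLabeling_attachLabel hf⟩

/-- If `G` is a finite simple connected graph with a nonempty set of
degree-1 vertices and `G` is strongly antimagic, then the graph `G ⊕ V₁'` obtained by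
attaching one pendant edge to each leaf of `G` is strongly antimagic. -/
theorem attachLeaves_isStronglyAntimagic {V : Type*} [Fintype V] (G : SimpleGraph V)
    (hconn : G.Connected) (hne : ∃ v : V, G.degree v = 1)
    (h : IsStronglyAntimagic G) :
    IsStronglyAntimagic (attachLeaves G) :=
  attachLeaves_isStronglyAntimagic_general G h
end
end

section
/- Let G = DS(L, P^core, R) be a double spider that contains a path P of length one among its legs, with P ∈ L. If deg_G(v_l) > deg_G(v_r) ≥ 3 and the double spider DS(L \ {P}, P^core, R) obtained from G by deleting the leg P admits a strongly antimagic labeling f satisfying φ_f(v_l) > φ_f(v_r), then G is strongly antimagic. -/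
open Classical

noncomputable section

/-- The vertex type of a double spider: the core path has vertices `0, …, s`,
and each leg of length `ℓ` (an entry of `L` or of `R`) contributes `ℓ` further
vertices, at distances `1, …, ℓ` from the branch vertex it is attached to. -/
abbrev DSVert (s : ℕ) (L R : List ℕ) : Type :=
  Fin (s + 1) ⊕ (((i : Fin L.length) × Fin (L.get i)) ⊕ ((i : Fin R.length) × Fin (R.get i)))

/-- The double spider `DS(L, Pᶜᵒʳᵉ, R)`: the core path `v_l = 0 — 1 — ⋯ — s = v_r`,
together with, for each entry `ℓ` of `L` (resp. of `R`), a leg which is a path of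
length `ℓ` attached at `v_l` (resp. at `v_r`). -/
def DoubleSpider (s : ℕ) (L R : List ℕ) : SimpleGraph (DSVert s L R) :=
  SimpleGraph.fromRel fun x y =>
    match x, y with
    | Sum.inl a, Sum.inl b => (b : ℕ) = (a : ℕ) + 1
    | Sum.inl a, Sum.inr (Sum.inl p) => (a : ℕ) = 0 ∧ (p.2 : ℕ) = 0
    | Sum.inl a, Sum.inr (Sum.inr p) => (a : ℕ) = s ∧ (p.2 : ℕ) = 0
    | Sum.inr (Sum.inl p), Sum.inr (Sum.inl q) => p.1 = q.1 ∧ (q.2 : ℕ) = (p.2 : ℕ) + 1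
    | Sum.inr (Sum.inr p), Sum.inr (Sum.inr q) => p.1 = q.1 ∧ (q.2 : ℕ) = (p.2 : ℕ) + 1
    | _, _ => False

/-- The branch vertex `v_l` of a double spider. -/
def vL (s : ℕ) (L R : List ℕ) : DSVert s L R := Sum.inl 0

/-- The branch vertex `v_r` of a double spider. -/
def vR (s : ℕ) (L R : List ℕ) : DSVert s L R := Sum.inl (Fin.last s)

/-! Deleting the leg `P = v_l w` leaves `G' = DS(L \ {P}, P^core, R)`. Label `v_l w` by `1` and
every other edge by its `f`-label plus one. Then `w` has sum `1 = deg w`, and an old vertex `z` has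
sum `φ_f(z) + deg_{G'}(z)`, plus `1` if `z = v_l`, while its degree grows by the same `0` or `1`.
Hence `deg u < deg v` still forces `φ u < φ v`, except possibly when `v = v_l` and
`deg_{G'}(u) = deg_{G'}(v_l)`. As `deg_{G'}(v_l) ≥ deg(v_r) ≥ 3` and every vertex other than
`v_l, v_r` has degree at most `2`, such a `u` is `v_r`, and `φ_f(v_r) < φ_f(v_l)` settles it. -/

theorem Sigma.fin_ext_iff {ι : Type*} {n : ι → ℕ} {p q : (i : ι) × Fin (n i)} :
    p = q ↔ p.1 = q.1 ∧ (p.2 : ℕ) = q.2 := by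
  obtain ⟨i, x⟩ := p
  obtain ⟨j, y⟩ := q
  constructor
  · rintro ⟨⟩
    exact ⟨rfl, rfl⟩
  · rintro ⟨rfl, h⟩
    exact congrArg _ (Fin.ext h)

theorem Set.bijOn_insert_extend_succ {α β : Type*} {f : α → ℕ} {s : Set α} {m : ℕ}
    (hf : Set.BijOn f s (Set.Icc 1 m)) {φ : α → β} (hφ : φ.Injective) {a : β}
    (ha : a ∉ Set.range φ) :
    Set.BijOn (Function.extend φ (fun x => f x + 1) fun _ => 1) (insert a (φ '' s))
      (Set.Icc 1 (m + 1)) := by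
  have hnew : Function.extend φ (fun x => f x + 1) (fun _ => 1) a = 1 :=
    Function.extend_apply' _ _ _ fun ⟨x, hx⟩ => ha ⟨x, hx⟩
  have hold (x : α) : Function.extend φ (fun x => f x + 1) (fun _ => 1) (φ x) = f x + 1 :=
    hφ.extend_apply _ _ x
  refine ⟨?_, ?_, fun n hn => ?_⟩
  · rintro _ (rfl | ⟨x, hx, rfl⟩)
    · simp [hnew]
    · have := hf.mapsTo hx
      simp_all
  · rintro _ (rfl | ⟨x, hx, rfl⟩) _ (rfl | ⟨y, hy, rfl⟩) hxy
    · rfl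
    · have := hf.mapsTo hy
      simp_all
    · have := hf.mapsTo hx
      simp_all
    · rw [hold, hold, add_left_inj] at hxy
      rw [hf.injOn hx hy hxy]
  · obtain rfl | hn1 := eq_or_ne n 1
    · exact ⟨a, Set.mem_insert _ _, hnew⟩
    · obtain ⟨x, hx, hfx⟩ := hf.surjOn (show n - 1 ∈ Set.Icc 1 m by grind)
      exact ⟨φ x, Set.mem_insert_of_mem _ ⟨x, hx, rfl⟩, by grind⟩

namespace SimpleGraph

section

variable {V : Type*} [Fintype V] {G : SimpleGraph V}

theorem vertexSum_eq_sum_neighborFinset (f : Sym2 V → ℕ) (u : V) :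
    vertexSum G f u = ∑ x ∈ G.neighborFinset u, f s(u, x) := by
  refine (Finset.sum_nbij (fun x => s(u, x)) (fun x hx => ?_) (fun x _ y _ h => ?_)
    (fun e he => ?_) fun _ _ => rfl).symm
  · simpa [mem_incidence_iff_neighbor] using hx
  · exact Sym2.congr_right.mp h
  · obtain ⟨he, hu⟩ := (mem_incidenceFinset G u e).mp he
    obtain ⟨x, rfl⟩ := Sym2.mem_iff_exists.mp hu
    exact ⟨x, by simpa using he, rfl⟩

theorem vertexSum_eq_zero_of_degree_eq_zero (f : Sym2 V → ℕ) {u : V} (hu : G.degree u = 0) :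
    vertexSum G f u = 0 := by
  rw [vertexSum_eq_sum_neighborFinset, Finset.card_eq_zero.mp hu, Finset.sum_empty]

theorem degree_le_vertexSum {f : Sym2 V → ℕ} (hf : ∀ e ∈ G.edgeSet, 1 ≤ f e) (u : V) :
    G.degree u ≤ vertexSum G f u := by
  rw [vertexSum_eq_sum_neighborFinset, ← card_neighborFinset_eq_degree, Finset.card_eq_sum_ones]
  exact Finset.sum_le_sum fun x hx => hf _ ((mem_neighborFinset G u x).mp hx)

theorem degree_le_two_of_forall_adj {x : V} (c d : V) (h : ∀ y, G.Adj x y → y = c ∨ y = d) :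
    G.degree x ≤ 2 := by
  rw [← card_neighborFinset_eq_degree]
  refine (Finset.card_le_card (t := {c, d}) fun y hy => ?_).trans Finset.card_le_two
  simpa using h y ((mem_neighborFinset _ _ _).mp hy)

end

variable {V V' : Type*} {G : SimpleGraph V} {G' : SimpleGraph V'}

/-- `G` is `G'` together with one further vertex `w`, adjacent only to `ι v`. -/
structure IsPendantExtension (ι : G' ↪g G) (v : V') (w : V) : Prop where
  mem_range_iff : ∀ x, x ∈ Set.range ι ↔ x ≠ w
  adj_iff : ∀ x, G.Adj w x ↔ x = ι v

def pendantLabeling (ι : G' ↪g G) (f : Sym2 V' → ℕ) : Sym2 V → ℕ :=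
  Function.extend (Sym2.map ι) (fun e => f e + 1) fun _ => 1

theorem pendantLabeling_map (ι : G' ↪g G) (f : Sym2 V' → ℕ) (e : Sym2 V') :
    pendantLabeling ι f (e.map ι) = f e + 1 :=
  (Sym2.map.injective ι.injective).extend_apply _ _ e

namespace IsPendantExtension

variable {ι : G' ↪g G} {v : V'} {w : V}

theorem map_ne_pendant (hG : IsPendantExtension ι v w) (z : V') : ι z ≠ w :=
  (hG.mem_range_iff _).mp ⟨z, rfl⟩

theorem eq_pendant_or_exists_map (hG : IsPendantExtension ι v w) (x : V) :
    x = w ∨ ∃ z, ι z = x :=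
  (eq_or_ne x w).imp_right fun hx => (hG.mem_range_iff x).mpr hx

theorem adj_map_iff (hG : IsPendantExtension ι v w) (z : V') (x : V) :
    G.Adj (ι z) x ↔ (z = v ∧ x = w) ∨ ∃ y, G'.Adj z y ∧ ι y = x := by
  by_cases hx : x = w
  · subst hx
    simp [G.adj_comm _ x, hG.adj_iff, hG.map_ne_pendant]
  · obtain ⟨y, rfl⟩ := (hG.mem_range_iff x).mpr hx
    simp [hG.map_ne_pendant]

theorem edgeSet_eq (hG : IsPendantExtension ι v w) :
    G.edgeSet = insert s(ι v, w) (Sym2.map ι '' G'.edgeSet) := by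
  ext e
  induction e using Sym2.ind with | _ x y => ?_
  rw [mem_edgeSet, Set.mem_insert_iff, Set.mem_image]
  constructor
  · intro hxy
    by_cases hx : x = w
    · subst hx
      exact Or.inl (((hG.adj_iff y).mp hxy).symm ▸ Sym2.eq_swap)
    obtain ⟨x, rfl⟩ := (hG.mem_range_iff _).mpr hx
    rcases (hG.adj_map_iff x y).mp hxy with ⟨rfl, rfl⟩ | ⟨y, hy, rfl⟩
    · exact Or.inl rfl
    · exact Or.inr ⟨s(x, y), hy, rfl⟩
  · rintro (h | ⟨e, he, h⟩)
    · rw [← mem_edgeSet, h, Sym2.eq_swap, mem_edgeSet, hG.adj_iff]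
    · rw [← mem_edgeSet, ← h]
      exact ι.map_mem_edgeSet_iff.mpr he

theorem pendantEdge_notMem_range (hG : IsPendantExtension ι v w) :
    s(ι v, w) ∉ Set.range (Sym2.map ι) := fun ⟨e, he⟩ => by
  obtain ⟨z, -, hz⟩ := Sym2.mem_map.mp (he ▸ Sym2.mem_mk_right _ _ : w ∈ e.map ι)
  exact hG.map_ne_pendant z hz

theorem pendantLabeling_of_pendant_mem (hG : IsPendantExtension ι v w) (f : Sym2 V' → ℕ)
    {e : Sym2 V} (he : w ∈ e) : pendantLabeling ι f e = 1 :=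
  Function.extend_apply' _ _ _ fun ⟨e', he'⟩ => by
    obtain ⟨z, -, hz⟩ := Sym2.mem_map.mp (he'.symm ▸ he)
    exact hG.map_ne_pendant z hz

section

variable [Fintype V]

theorem neighborFinset_pendant (hG : IsPendantExtension ι v w) :
    G.neighborFinset w = {ι v} := by
  ext
  simp [hG.adj_iff]

theorem degree_pendant (hG : IsPendantExtension ι v w) : G.degree w = 1 := by
  rw [← card_neighborFinset_eq_degree, hG.neighborFinset_pendant, Finset.card_singleton]

theorem vertexSum_pendant (hG : IsPendantExtension ι v w) (f : Sym2 V' → ℕ) :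
    vertexSum G (pendantLabeling ι f) w = 1 := by
  rw [vertexSum_eq_sum_neighborFinset, hG.neighborFinset_pendant, Finset.sum_singleton,
    hG.pendantLabeling_of_pendant_mem f (Sym2.mem_mk_left _ _)]

end

variable [Fintype V']

theorem disjoint_neighborFinset_map_pendant (hG : IsPendantExtension ι v w) (z : V') :
    Disjoint ((G'.neighborFinset z).map ι.toEmbedding) (if z = v then {w} else ∅) := by
  split_ifs
  · simpa using fun y _ => hG.map_ne_pendant y
  · exact Finset.disjoint_empty_right _

variable [Fintype V]

theorem card_edgeFinset (hG : IsPendantExtension ι v w) :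
    G.edgeFinset.card = G'.edgeFinset.card + 1 := by
  rw [← Set.ncard_coe_finset, ← Set.ncard_coe_finset, coe_edgeFinset, coe_edgeFinset,
    hG.edgeSet_eq, Set.ncard_insert_of_notMem,
    Set.ncard_image_of_injective _ (Sym2.map.injective ι.injective)]
  exact fun h => hG.pendantEdge_notMem_range (Set.image_subset_range _ _ h)

theorem neighborFinset_map (hG : IsPendantExtension ι v w) (z : V') :
    G.neighborFinset (ι z) =
      (G'.neighborFinset z).map ι.toEmbedding ∪ if z = v then {w} else ∅ := by
  ext x
  simp only [mem_neighborFinset, hG.adj_map_iff, Finset.mem_union, Finset.mem_map]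
  split_ifs <;> simp_all [or_comm]

theorem degree_map (hG : IsPendantExtension ι v w) (z : V') :
    G.degree (ι z) = G'.degree z + if z = v then 1 else 0 := by
  rw [← card_neighborFinset_eq_degree, hG.neighborFinset_map,
    Finset.card_union_of_disjoint (hG.disjoint_neighborFinset_map_pendant z), Finset.card_map,
    card_neighborFinset_eq_degree]
  split_ifs <;> rfl

theorem vertexSum_map (hG : IsPendantExtension ι v w) (f : Sym2 V' → ℕ) (z : V') :
    vertexSum G (pendantLabeling ι f) (ι z) =
      vertexSum G' f z + G'.degree z + if z = v then 1 else 0 := by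
  rw [vertexSum_eq_sum_neighborFinset, hG.neighborFinset_map,
    Finset.sum_union (hG.disjoint_neighborFinset_map_pendant z), Finset.sum_map,
    vertexSum_eq_sum_neighborFinset, ← card_neighborFinset_eq_degree, Finset.card_eq_sum_ones,
    ← Finset.sum_add_distrib]
  congr 1
  · exact Finset.sum_congr rfl fun y _ => pendantLabeling_map ι f s(z, y)
  · split_ifs
    · simpa using hG.pendantLabeling_of_pendant_mem f (Sym2.mem_mk_right _ _)
    · rfl

theorem bijOn_pendantLabeling (hG : IsPendantExtension ι v w) {f : Sym2 V' → ℕ}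
    (hf : Set.BijOn f G'.edgeSet (Set.Icc 1 G'.edgeFinset.card)) :
    Set.BijOn (pendantLabeling ι f) G.edgeSet (Set.Icc 1 G.edgeFinset.card) := by
  rw [hG.card_edgeFinset, hG.edgeSet_eq]
  exact Set.bijOn_insert_extend_succ hf (Sym2.map.injective ι.injective)
    hG.pendantEdge_notMem_range

theorem vertexSum_map_ne_pendant (hG : IsPendantExtension ι v w) {f : Sym2 V' → ℕ}
    (hf : ∀ e ∈ G'.edgeSet, 1 ≤ f e) (hv : 0 < G'.degree v) (z : V') :
    vertexSum G (pendantLabeling ι f) (ι z) ≠ vertexSum G (pendantLabeling ι f) w := by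
  rw [hG.vertexSum_map, hG.vertexSum_pendant]
  have := degree_le_vertexSum hf z
  obtain rfl | hz := eq_or_ne z v
  · simp only [if_true]
    omega
  · rw [if_neg hz]
    obtain h0 | hpos := Nat.eq_zero_or_pos (G'.degree z)
    · rw [vertexSum_eq_zero_of_degree_eq_zero f h0, h0]
      omega
    · omega

theorem vertexSum_pendantLabeling_lt_of_degree_lt (hG : IsPendantExtension ι v w)
    {f : Sym2 V' → ℕ} (hf : IsStronglyAntimagicLabeling G' f)
    (hmax : ∀ z, G'.degree z = G'.degree v → vertexSum G' f z ≤ vertexSum G' f v)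
    {x y : V} (hxy : G.degree x < G.degree y) :
    vertexSum G (pendantLabeling ι f) x < vertexSum G (pendantLabeling ι f) y := by
  rcases hG.eq_pendant_or_exists_map x with rfl | ⟨a, rfl⟩ <;>
    rcases hG.eq_pendant_or_exists_map y with rfl | ⟨b, rfl⟩
  · exact absurd hxy (lt_irrefl _)
  · have := degree_le_vertexSum (fun e he => ((hG.bijOn_pendantLabeling hf.1).mapsTo he).1) (ι b)
    rw [hG.degree_pendant] at hxy
    rw [hG.vertexSum_pendant]
    omega
  · rw [hG.degree_pendant, Nat.lt_one_iff] at hxy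
    rw [vertexSum_eq_zero_of_degree_eq_zero _ hxy, hG.vertexSum_pendant]
    exact Nat.one_pos
  · rw [hG.degree_map, hG.degree_map] at hxy
    rw [hG.vertexSum_map, hG.vertexSum_map]
    rcases lt_or_ge (G'.degree a) (G'.degree b) with hab | hab
    · have := hf.2.2 a b hab
      split_ifs at hxy ⊢ <;> omega
    -- only the extra `1` at `v` can make up for `deg a ≥ deg b`, and `hmax` covers that case
    · obtain rfl : b = v := by
        by_contra hb
        simp only [hb, if_false] at hxy
        omega
      have ha : a ≠ b := fun h => by subst h; exact lt_irrefl _ hxy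
      simp only [ha, if_false, if_true] at hxy ⊢
      have := hmax a (by omega)
      omega

theorem isStronglyAntimagicLabeling_pendantLabeling (hG : IsPendantExtension ι v w)
    {f : Sym2 V' → ℕ} (hf : IsStronglyAntimagicLabeling G' f) (hv : 0 < G'.degree v)
    (hmax : ∀ z, G'.degree z = G'.degree v → vertexSum G' f z ≤ vertexSum G' f v) :
    IsStronglyAntimagicLabeling G (pendantLabeling ι f) := by
  have hlt := fun x y => hG.vertexSum_pendantLabeling_lt_of_degree_lt hf hmax (x := x) (y := y)
  have hne := hG.vertexSum_map_ne_pendant (fun e he => (hf.1.mapsTo he).1) hv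
  refine ⟨hG.bijOn_pendantLabeling hf.1, fun x y hxy => ?_, hlt⟩
  rcases hG.eq_pendant_or_exists_map x with rfl | ⟨a, rfl⟩ <;>
    rcases hG.eq_pendant_or_exists_map y with rfl | ⟨b, rfl⟩
  · rfl
  · exact absurd hxy.symm (hne b)
  · exact absurd hxy (hne a)
  · have hdeg : G.degree (ι a) = G.degree (ι b) :=
      le_antisymm (not_lt.mp fun h => (hlt _ _ h).ne' hxy) (not_lt.mp fun h => (hlt _ _ h).ne hxy)
    rw [hG.degree_map, hG.degree_map] at hdeg
    rw [hG.vertexSum_map, hG.vertexSum_map] at hxy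
    rw [hf.2.1 (show vertexSum G' f a = vertexSum G' f b by omega)]

end IsPendantExtension

end SimpleGraph

namespace List

variable {L : List ℕ} {k : ℕ}

def eraseIdxEmb (hk : k < L.length) (i : Fin (L.eraseIdx k).length) : Fin L.length :=
  if h : (i : ℕ) < k then ⟨i, h.trans hk⟩
  else ⟨i + 1, by have := i.isLt; have := length_eraseIdx_of_lt hk; omega⟩

theorem val_eraseIdxEmb (hk : k < L.length) (i : Fin (L.eraseIdx k).length) :
    (eraseIdxEmb hk i : ℕ) = if (i : ℕ) < k then (i : ℕ) else (i : ℕ) + 1 := by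
  unfold eraseIdxEmb
  split_ifs <;> rfl

theorem get_eraseIdxEmb (hk : k < L.length) (i : Fin (L.eraseIdx k).length) :
    (L.eraseIdx k).get i = L.get (eraseIdxEmb hk i) := by
  simp only [get_eq_getElem, getElem_eraseIdx, eraseIdxEmb]
  split_ifs <;> rfl

theorem eraseIdxEmb_injective (hk : k < L.length) : (eraseIdxEmb hk).Injective := by
  intro i j h
  have := congrArg Fin.val h
  simp only [val_eraseIdxEmb] at this
  exact Fin.ext (by split_ifs at this <;> omega)

theorem eraseIdxEmb_ne (hk : k < L.length) (i : Fin (L.eraseIdx k).length) :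
    (eraseIdxEmb hk i : ℕ) ≠ k := by
  rw [val_eraseIdxEmb]
  split_ifs <;> omega

theorem exists_eraseIdxEmb_eq (hk : k < L.length) {j : Fin L.length} (hj : (j : ℕ) ≠ k) :
    ∃ i, eraseIdxEmb hk i = j := by
  have := j.isLt
  have hlen := length_eraseIdx_of_lt hk
  by_cases hjk : (j : ℕ) < k
  · exact ⟨⟨j, by omega⟩, Fin.ext (by simp [val_eraseIdxEmb, hjk])⟩
  · refine ⟨⟨j - 1, by omega⟩, Fin.ext ?_⟩
    simp only [val_eraseIdxEmb]
    split_ifs <;> omega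

end List

namespace DoubleSpider

variable {s k : ℕ} {L R : List ℕ}

theorem degree_le_two {x : DSVert s L R} (hl : x ≠ vL s L R) (hr : x ≠ vR s L R) :
    (DoubleSpider s L R).degree x ≤ 2 := by
  rcases x with a | ⟨i, j⟩ | ⟨i, j⟩
  · have ha : 0 < (a : ℕ) ∧ (a : ℕ) < s := by
      simp only [vL, vR, ne_eq, Sum.inl.injEq, Fin.ext_iff, Fin.val_zero, Fin.val_last] at hl hr
      omega
    refine SimpleGraph.degree_le_two_of_forall_adj
      (Sum.inl ⟨a - 1, by omega⟩) (Sum.inl ⟨a + 1, by omega⟩) ?_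
    rintro (b | ⟨i', j'⟩ | ⟨i', j'⟩) hy <;>
      simp [DoubleSpider, Fin.ext_iff, -Fin.val_eq_zero_iff] at hy ⊢ <;> omega
  -- `(j + 1) % ℓ` is `j + 1` whenever the leg has a vertex there; `%` only keeps it in range
  · refine SimpleGraph.degree_le_two_of_forall_adj
      (if (j : ℕ) = 0 then vL s L R else Sum.inr (Sum.inl ⟨i, ⟨j - 1, by omega⟩⟩))
      (Sum.inr (Sum.inl ⟨i, ⟨(j + 1) % L.get i, Nat.mod_lt _ j.pos⟩⟩)) ?_
    rintro (b | ⟨i', j'⟩ | ⟨i', j'⟩) hy <;>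
      simp [DoubleSpider, Fin.ext_iff, Sigma.fin_ext_iff, -Fin.val_eq_zero_iff,
        -Sigma.mk.injEq] at hy ⊢
    · simp_all [vL, Fin.ext_iff, -Fin.val_eq_zero_iff]
    · obtain rfl : i' = i := Fin.ext (by omega)
      have hj' : (j' : ℕ) < L[(i' : ℕ)] := j'.isLt
      rcases hy.2 with ⟨-, h⟩ | ⟨-, h⟩
      · rw [Nat.mod_eq_of_lt (by omega)]
        omega
      · simp [h, -Sigma.mk.injEq]
  · refine SimpleGraph.degree_le_two_of_forall_adj
      (if (j : ℕ) = 0 then vR s L R else Sum.inr (Sum.inr ⟨i, ⟨j - 1, by omega⟩⟩))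
      (Sum.inr (Sum.inr ⟨i, ⟨(j + 1) % R.get i, Nat.mod_lt _ j.pos⟩⟩)) ?_
    rintro (b | ⟨i', j'⟩ | ⟨i', j'⟩) hy <;>
      simp [DoubleSpider, Fin.ext_iff, Sigma.fin_ext_iff, -Fin.val_eq_zero_iff,
        -Sigma.mk.injEq] at hy ⊢
    · simp_all [vR, Fin.ext_iff, -Fin.val_eq_zero_iff]
    · obtain rfl : i' = i := Fin.ext (by omega)
      have hj' : (j' : ℕ) < R[(i' : ℕ)] := j'.isLt
      rcases hy.2 with ⟨-, h⟩ | ⟨-, h⟩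
      · rw [Nat.mod_eq_of_lt (by omega)]
        omega
      · simp [h, -Sigma.mk.injEq]

def eraseLegEmbedding (s : ℕ) (R : List ℕ) (hk : k < L.length) :
    DoubleSpider s (L.eraseIdx k) R ↪g DoubleSpider s L R where
  toFun := Sum.map id <| Sum.map
    (Sigma.map (L.eraseIdxEmb hk) fun i => Fin.cast (L.get_eraseIdxEmb hk i)) id
  inj' := Sum.map_injective.mpr ⟨Function.injective_id, Sum.map_injective.mpr
    ⟨(L.eraseIdxEmb_injective hk).sigma_map fun _ => Fin.cast_injective _,
      Function.injective_id⟩⟩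
  map_rel_iff' := by
    rintro (a | ⟨i, x⟩ | p) (b | ⟨j, y⟩ | q) <;>
      simp [DoubleSpider, Sigma.map, Sigma.fin_ext_iff, -Sigma.mk.injEq,
        (L.eraseIdxEmb_injective hk).eq_iff]

@[simp]
theorem eraseLegEmbedding_inl (hk : k < L.length) (a : Fin (s + 1)) :
    eraseLegEmbedding s R hk (Sum.inl a) = Sum.inl a :=
  rfl

@[simp]
theorem eraseLegEmbedding_inr_inl (hk : k < L.length) (i : Fin (L.eraseIdx k).length)
    (x : Fin ((L.eraseIdx k).get i)) :
    eraseLegEmbedding s R hk (Sum.inr (Sum.inl ⟨i, x⟩)) =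
      Sum.inr (Sum.inl ⟨L.eraseIdxEmb hk i, Fin.cast (L.get_eraseIdxEmb hk i) x⟩) :=
  rfl

@[simp]
theorem eraseLegEmbedding_inr_inr (hk : k < L.length) (p : (i : Fin R.length) × Fin (R.get i)) :
    eraseLegEmbedding s R hk (Sum.inr (Sum.inr p)) = Sum.inr (Sum.inr p) :=
  rfl

theorem eraseLegEmbedding_vL (hk : k < L.length) :
    eraseLegEmbedding s R hk (vL s (L.eraseIdx k) R) = vL s L R :=
  rfl

theorem eraseLegEmbedding_vR (hk : k < L.length) :
    eraseLegEmbedding s R hk (vR s (L.eraseIdx k) R) = vR s L R :=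
  rfl

theorem isPendantExtension_eraseLeg (hk : k < L.length) (h1 : L.get ⟨k, hk⟩ = 1) :
    SimpleGraph.IsPendantExtension (eraseLegEmbedding s R hk) (vL s (L.eraseIdx k) R)
      (Sum.inr (Sum.inl ⟨⟨k, hk⟩, ⟨0, by rw [h1]; exact one_pos⟩⟩)) where
  mem_range_iff x := by
    constructor
    · rintro ⟨(a | ⟨i, y⟩ | p), rfl⟩ <;>
        simp [Sigma.fin_ext_iff, -Sigma.mk.injEq, Fin.ext_iff, L.eraseIdxEmb_ne hk]
    · rcases x with a | ⟨j, y⟩ | p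
      · exact fun _ => ⟨Sum.inl a, rfl⟩
      · intro hx
        have hj : (j : ℕ) ≠ k := by
          rintro rfl
          have : (y : ℕ) < 1 := h1 ▸ y.isLt
          exact hx (by simp [Sigma.fin_ext_iff, -Sigma.mk.injEq]; omega)
        obtain ⟨i, rfl⟩ := L.exists_eraseIdxEmb_eq hk hj
        exact ⟨Sum.inr (Sum.inl ⟨i, Fin.cast (L.get_eraseIdxEmb hk i).symm y⟩), rfl⟩
      · exact fun _ => ⟨Sum.inr (Sum.inr p), rfl⟩
  adj_iff x := by
    rw [vL, eraseLegEmbedding_inl]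
    rcases x with a | ⟨j, y⟩ | p <;>
      simp [DoubleSpider, Sigma.fin_ext_iff, -Sigma.mk.injEq]
    rintro - rfl hy
    have : (y : ℕ) < 1 := h1 ▸ y.isLt
    omega

end DoubleSpider

theorem stronglyAntimagic_of_erase_left_one_general (s : ℕ) (L R : List ℕ)
    (hP : 1 ∈ L)
    (hlr : (DoubleSpider s L R).degree (vR s L R) < (DoubleSpider s L R).degree (vL s L R))
    (hr : 3 ≤ (DoubleSpider s L R).degree (vR s L R))
    (h : ∃ f : Sym2 (DSVert s (L.erase 1) R) → ℕ,
      IsStronglyAntimagicLabeling (DoubleSpider s (L.erase 1) R) f ∧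
      vertexSum (DoubleSpider s (L.erase 1) R) f (vR s (L.erase 1) R) <
        vertexSum (DoubleSpider s (L.erase 1) R) f (vL s (L.erase 1) R)) :
    IsStronglyAntimagic (DoubleSpider s L R) := by
  obtain ⟨k, hk, h1, herase⟩ :
      ∃ k, ∃ hk : k < L.length, L.get ⟨k, hk⟩ = 1 ∧ L.erase 1 = L.eraseIdx k :=
    ⟨_, List.idxOf_lt_length_iff.mpr hP, List.getElem_idxOf _,
      List.erase_eq_eraseIdx_of_idxOf rfl⟩
  rw [herase] at h
  obtain ⟨f, hf, hsum⟩ := h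
  have hG := DoubleSpider.isPendantExtension_eraseLeg (s := s) (R := R) hk h1
  have hRL : vR s (L.eraseIdx k) R ≠ vL s (L.eraseIdx k) R := fun h => by
    rw [← DoubleSpider.eraseLegEmbedding_vR hk, h, DoubleSpider.eraseLegEmbedding_vL] at hlr
    exact lt_irrefl _ hlr
  have hvL := hG.degree_map (vL s (L.eraseIdx k) R)
  have hvR := hG.degree_map (vR s (L.eraseIdx k) R)
  rw [DoubleSpider.eraseLegEmbedding_vL, if_pos rfl] at hvL
  rw [DoubleSpider.eraseLegEmbedding_vR, if_neg hRL] at hvR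
  refine ⟨_, hG.isStronglyAntimagicLabeling_pendantLabeling hf (by omega) fun z hz => ?_⟩
  by_cases hzL : z = vL s (L.eraseIdx k) R
  · rw [hzL]
  by_cases hzR : z = vR s (L.eraseIdx k) R
  · exact hzR ▸ hsum.le
  exact absurd (DoubleSpider.degree_le_two hzL hzR) (by omega)

/-- Let `G = DS(L, Pᶜᵒʳᵉ, R)` be a double spider containing a leg `P` of
length one with `P ∈ L`.  If `deg_G(v_l) > deg_G(v_r) ≥ 3` and the double spider
`DS(L \ {P}, Pᶜᵒʳᵉ, R)` obtained from `G` by deleting the leg `P` admits a strongly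
antimagic labeling `f` with `φ_f(v_l) > φ_f(v_r)`, then `G` is strongly antimagic. -/
theorem stronglyAntimagic_of_erase_left_one (s : ℕ) (hs : 1 ≤ s) (L R : List ℕ)
    (hL : ∀ ℓ ∈ L, 1 ≤ ℓ) (hR : ∀ ℓ ∈ R, 1 ≤ ℓ)
    (hP : 1 ∈ L)
    (hlr : (DoubleSpider s L R).degree (vR s L R) < (DoubleSpider s L R).degree (vL s L R))
    (hr : 3 ≤ (DoubleSpider s L R).degree (vR s L R))
    (h : ∃ f : Sym2 (DSVert s (L.erase 1) R) → ℕ,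
      IsStronglyAntimagicLabeling (DoubleSpider s (L.erase 1) R) f ∧
      vertexSum (DoubleSpider s (L.erase 1) R) f (vR s (L.erase 1) R) <
        vertexSum (DoubleSpider s (L.erase 1) R) f (vL s (L.erase 1) R)) :
    IsStronglyAntimagic (DoubleSpider s L R) :=
  stronglyAntimagic_of_erase_left_one_general s L R hP hlr hr h
end
end

section
/- For every integer s ≥ 1, the double spider DS(L, P^core, R) in which L consists of two paths of length 1, R consists of two paths of length 1, and the core path P^core has length s (so both branch vertices have degree 3 and the tree has s+4 edges) is strongly antimagic. -/
open Classical

noncomputable section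

/-!
Enumerate the `s + 4` edges and label the core edges alternately small and large: core edge `j`
(joining core vertices `j` and `j + 1`) gets `⌊s/2⌋ + 5 + j/2` for even `j` and `(j + 1)/2` for
odd `j`, while the four pendant edges get the middle labels `⌊s/2⌋ + 1, …, ⌊s/2⌋ + 4`. Two
consecutive core labels add up to `⌊s/2⌋ + 6 + j`, so the interior core vertex `a` has sum
`⌊s/2⌋ + 5 + a`, above every leaf sum. The branch vertices collect two pendant labels and one
core label, which puts their sums above all interior ones and keeps them apart from each other.
-/

open Finset Function

section EdgeEnumeration

variable {V ι : Type*} [Fintype V] [Fintype ι] {G : SimpleGraph V} {edge : ι → Sym2 V}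

theorem incidenceFinset_eq_map [DecidableEq V] (hinj : Injective edge)
    (hE : Set.range edge = G.edgeSet) (u : V) :
    G.incidenceFinset u = ({k | u ∈ edge k} : Finset ι).map ⟨edge, hinj⟩ := by
  ext e
  simp only [SimpleGraph.mem_incidenceFinset, SimpleGraph.incidenceSet, ← hE, mem_map, mem_filter,
    mem_univ, true_and, Set.mem_ofPred_eq, Set.mem_range, Embedding.coeFn_mk]
  constructor
  · rintro ⟨⟨k, rfl⟩, hu⟩
    exact ⟨k, hu, rfl⟩
  · rintro ⟨k, hu, rfl⟩
    exact ⟨⟨k, rfl⟩, hu⟩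

theorem vertexSum_extend [DecidableEq V] (hinj : Injective edge)
    (hE : Set.range edge = G.edgeSet) (label : ι → ℕ) (u : V) :
    vertexSum G (extend edge label 0) u = ∑ k with u ∈ edge k, label k :=
  calc vertexSum G (extend edge label 0) u
      = ∑ e ∈ G.incidenceFinset u, extend edge label 0 e := by unfold vertexSum; congr!
    _ = ∑ k with u ∈ edge k, label k := by
      rw [incidenceFinset_eq_map hinj hE, sum_map]
      exact sum_congr rfl fun k _ => hinj.extend_apply label 0 k

theorem degree_eq_card_filter_mem [DecidableEq V] (hinj : Injective edge)
    (hE : Set.range edge = G.edgeSet) (u : V) : G.degree u = #{k | u ∈ edge k} := by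
  rw [← SimpleGraph.card_incidenceFinset_eq_degree, incidenceFinset_eq_map hinj hE, card_map]

theorem card_edgeFinset_eq (hinj : Injective edge) (hE : Set.range edge = G.edgeSet) :
    #G.edgeFinset = Fintype.card ι := by
  rw [← card_univ, ← card_map ⟨edge, hinj⟩]
  congr 1
  ext e
  simp [← hE]

theorem bijOn_extend (hinj : Injective edge) (hE : Set.range edge = G.edgeSet)
    {label : ι → ℕ} (hlabel : Injective label)
    (hmem : ∀ k, label k ∈ Set.Icc 1 (Fintype.card ι)) :
    Set.BijOn (extend edge label 0) G.edgeSet (Set.Icc 1 #G.edgeFinset) := by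
  have hsurj : Set.SurjOn label (univ : Finset ι) (Finset.Icc 1 (Fintype.card ι)) :=
    surjOn_of_injOn_of_card_le label (fun k _ => by simpa using hmem k) hlabel.injOn (by simp)
  rw [card_edgeFinset_eq hinj hE, ← hE]
  refine ⟨?_, ?_, ?_⟩
  · rintro _ ⟨k, rfl⟩
    rw [hinj.extend_apply]
    exact hmem k
  · rintro _ ⟨k, rfl⟩ _ ⟨k', rfl⟩ h
    rw [hinj.extend_apply, hinj.extend_apply] at h
    rw [hlabel h]
  · intro n hn
    obtain ⟨k, -, rfl⟩ := hsurj (by simpa using hn)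
    exact ⟨edge k, ⟨k, rfl⟩, hinj.extend_apply label 0 k⟩

theorem isStronglyAntimagic_of_edge_enumeration [DecidableEq V] (hinj : Injective edge)
    (hE : Set.range edge = G.edgeSet) (label : ι → ℕ) (hlabel : Injective label)
    (hmem : ∀ k, label k ∈ Set.Icc 1 (Fintype.card ι))
    (hsum : Injective fun u => ∑ k with u ∈ edge k, label k)
    (hmono : ∀ u v, #{k | u ∈ edge k} < #{k | v ∈ edge k} →
      ∑ k with u ∈ edge k, label k < ∑ k with v ∈ edge k, label k) :
    IsStronglyAntimagic G := by
  refine ⟨extend edge label 0, bijOn_extend hinj hE hlabel hmem, fun u v h => ?_, fun u v h => ?_⟩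
  · simp only [vertexSum_extend hinj hE] at h
    exact hsum h
  · simp only [vertexSum_extend hinj hE, degree_eq_card_filter_mem hinj hE] at h ⊢
    exact hmono u v h

end EdgeEnumeration

section DoubleSpiderTwoTwo

variable (s : ℕ)

def legVertex (i : Fin 2) :
    (i : Fin ([1, 1] : List ℕ).length) × Fin (([1, 1] : List ℕ).get i) :=
  ⟨i, 0, by fin_cases i <;> simp⟩

theorem legVertex_fst
    (p : (i : Fin ([1, 1] : List ℕ).length) × Fin (([1, 1] : List ℕ).get i)) :
    legVertex p.1 = p := by
  obtain ⟨i, x⟩ := p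
  fin_cases i <;> fin_cases x <;> rfl

theorem legVertex_surjective : Surjective legVertex := fun p => ⟨p.1, legVertex_fst p⟩

theorem legVertex_injective : Injective legVertex := fun _ _ h => congrArg Sigma.fst h

theorem dsVertex_cases {P : DSVert s [1, 1] [1, 1] → Prop} (zero : P (.inl 0))
    (last : P (.inl (Fin.last s)))
    (interior : ∀ a : Fin (s + 1), 0 < (a : ℕ) → (a : ℕ) < s → P (.inl a))
    (leafL : ∀ i, P (.inr (.inl (legVertex i)))) (leafR : ∀ i, P (.inr (.inr (legVertex i))))
    (u : DSVert s [1, 1] [1, 1]) : P u := by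
  rcases u with a | p | p
  · rcases Nat.eq_zero_or_pos a with ha | ha
    · obtain rfl : a = 0 := Fin.ext ha
      exact zero
    rcases (Nat.lt_succ_iff.mp a.isLt).eq_or_lt with ha' | ha'
    · obtain rfl : a = Fin.last s := Fin.ext ha'
      exact last
    · exact interior a ha ha'
  · rw [← legVertex_fst p]
    exact leafL p.1
  · rw [← legVertex_fst p]
    exact leafR p.1

def dsEdge : Fin s ⊕ Fin 2 ⊕ Fin 2 → Sym2 (DSVert s [1, 1] [1, 1])
  | .inl j => s(.inl j.castSucc, .inl j.succ)
  | .inr (.inl i) => s(.inl 0, .inr (.inl (legVertex i)))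
  | .inr (.inr i) => s(.inl (Fin.last s), .inr (.inr (legVertex i)))

theorem dsEdge_injective : Injective (dsEdge s) := by
  rintro (j | i | i) (j' | i' | i') h <;> simp [dsEdge, legVertex, Fin.ext_iff] at h ⊢ <;> omega

theorem dsEdge_mem_edgeSet (k : Fin s ⊕ Fin 2 ⊕ Fin 2) :
    dsEdge s k ∈ (DoubleSpider s [1, 1] [1, 1]).edgeSet := by
  rcases k with j | i | i <;>
    simp only [dsEdge, SimpleGraph.mem_edgeSet, DoubleSpider, SimpleGraph.fromRel_adj] <;>
    simp [legVertex, Fin.ext_iff]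

theorem range_dsEdge : Set.range (dsEdge s) = (DoubleSpider s [1, 1] [1, 1]).edgeSet := by
  refine (Set.range_subset_iff.mpr (dsEdge_mem_edgeSet s)).antisymm fun e he => ?_
  induction e using Sym2.ind with
  | _ x y =>
  simp only [SimpleGraph.mem_edgeSet, DoubleSpider, SimpleGraph.fromRel_adj] at he
  rcases x with a | p | p <;> rcases y with b | q | q <;>
    (try obtain ⟨i, rfl⟩ := legVertex_surjective p) <;>
    (try obtain ⟨i', rfl⟩ := legVertex_surjective q) <;>
    simp only [List.length_cons, List.length_nil, Nat.reduceAdd, List.get_eq_getElem, legVertex,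
      ne_eq, Sum.inl.injEq, Sum.inr.injEq, Sigma.mk.injEq, reduceCtorEq, not_false_eq_true,
      Fin.val_eq_zero_iff, and_true, or_false, false_or, true_and, not_and, zero_add, zero_ne_one,
      and_false, or_self] at he
  case inl.inl =>
    obtain ⟨-, h | h⟩ := he
    · exact ⟨.inl ⟨a, by omega⟩, by simp [dsEdge, Fin.ext_iff, h]⟩
    · exact ⟨.inl ⟨b, by omega⟩, by rw [Sym2.eq_swap]; simp [dsEdge, Fin.ext_iff, h]⟩
  case inl.inr.inl => exact ⟨.inr (.inl i'), by simp [dsEdge, he]⟩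
  case inl.inr.inr => exact ⟨.inr (.inr i'), by simp [dsEdge, Fin.ext_iff, he]⟩
  case inr.inl.inl => exact ⟨.inr (.inl i), by rw [Sym2.eq_swap]; simp [dsEdge, he]⟩
  case inr.inr.inl =>
    exact ⟨.inr (.inr i), by rw [Sym2.eq_swap]; simp [dsEdge, Fin.ext_iff, he]⟩

theorem inl_mem_dsEdge_inl (a : Fin (s + 1)) (j : Fin s) :
    .inl a ∈ dsEdge s (.inl j) ↔ (a : ℕ) = j ∨ (a : ℕ) = j + 1 := by
  simp [dsEdge, Fin.ext_iff]

theorem inl_mem_dsEdge_inr_inl (a : Fin (s + 1)) (i : Fin 2) :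
    .inl a ∈ dsEdge s (.inr (.inl i)) ↔ a = 0 := by
  simp [dsEdge]

theorem inl_mem_dsEdge_inr_inr (a : Fin (s + 1)) (i : Fin 2) :
    .inl a ∈ dsEdge s (.inr (.inr i)) ↔ a = Fin.last s := by
  simp [dsEdge]

theorem inr_inl_mem_dsEdge (i : Fin 2) (k : Fin s ⊕ Fin 2 ⊕ Fin 2) :
    .inr (.inl (legVertex i)) ∈ dsEdge s k ↔ k = .inr (.inl i) := by
  rcases k with j | i' | i' <;> simp [dsEdge, legVertex_injective.eq_iff, eq_comm]

theorem inr_inr_mem_dsEdge (i : Fin 2) (k : Fin s ⊕ Fin 2 ⊕ Fin 2) :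
    .inr (.inr (legVertex i)) ∈ dsEdge s k ↔ k = .inr (.inr i) := by
  rcases k with j | i' | i' <;> simp [dsEdge, legVertex_injective.eq_iff, eq_comm]

theorem filter_mem_dsEdge_inl_zero (hs : 0 < s) :
    ({k | .inl 0 ∈ dsEdge s k} : Finset _) = {.inl ⟨0, hs⟩, .inr (.inl 0), .inr (.inl 1)} := by
  ext (j | i | i) <;>
    simp only [mem_filter, mem_univ, true_and, mem_insert, mem_singleton, inl_mem_dsEdge_inl,
      inl_mem_dsEdge_inr_inl, inl_mem_dsEdge_inr_inr, Sum.inl.injEq, Sum.inr.injEq, reduceCtorEq,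
      Fin.ext_iff, Fin.val_zero, Fin.val_last] <;> grind

theorem filter_mem_dsEdge_inl_last (hs : 0 < s) :
    ({k | .inl (Fin.last s) ∈ dsEdge s k} : Finset _) =
      {.inl ⟨s - 1, by omega⟩, .inr (.inr 0), .inr (.inr 1)} := by
  ext (j | i | i) <;>
    simp only [mem_filter, mem_univ, true_and, mem_insert, mem_singleton, inl_mem_dsEdge_inl,
      inl_mem_dsEdge_inr_inl, inl_mem_dsEdge_inr_inr, Sum.inl.injEq, Sum.inr.injEq, reduceCtorEq,
      Fin.ext_iff, Fin.val_zero, Fin.val_last] <;> grind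

theorem filter_mem_dsEdge_inl_of_pos_of_lt (a : Fin (s + 1)) (h0 : 0 < (a : ℕ))
    (h1 : (a : ℕ) < s) :
    ({k | .inl a ∈ dsEdge s k} : Finset _) = {.inl ⟨a - 1, by omega⟩, .inl ⟨a, h1⟩} := by
  ext (j | i | i) <;>
    simp only [mem_filter, mem_univ, true_and, mem_insert, mem_singleton, inl_mem_dsEdge_inl,
      inl_mem_dsEdge_inr_inl, inl_mem_dsEdge_inr_inr, Sum.inl.injEq, reduceCtorEq, Fin.ext_iff,
      Fin.val_zero, Fin.val_last] <;> grind

theorem filter_mem_dsEdge_inr_inl (i : Fin 2) :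
    ({k | .inr (.inl (legVertex i)) ∈ dsEdge s k} : Finset _) = {.inr (.inl i)} := by
  ext k
  simp only [mem_filter, mem_univ, true_and, mem_singleton, inr_inl_mem_dsEdge]

theorem filter_mem_dsEdge_inr_inr (i : Fin 2) :
    ({k | .inr (.inr (legVertex i)) ∈ dsEdge s k} : Finset _) = {.inr (.inr i)} := by
  ext k
  simp only [mem_filter, mem_univ, true_and, mem_singleton, inr_inr_mem_dsEdge]

def coreLabel (j : ℕ) : ℕ := if j % 2 = 0 then s / 2 + 5 + j / 2 else (j + 1) / 2

def dsLabel : Fin s ⊕ Fin 2 ⊕ Fin 2 → ℕ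
  | .inl j => coreLabel s j
  | .inr (.inl i) => s / 2 + 1 + 2 * i
  | .inr (.inr i) => s / 2 + 2 + 2 * i

theorem coreLabel_small_or_large {j : ℕ} (hj : j < s) :
    1 ≤ coreLabel s j ∧ coreLabel s j ≤ s / 2 ∨
      s / 2 + 5 ≤ coreLabel s j ∧ coreLabel s j ≤ s + 4 := by
  unfold coreLabel; split_ifs <;> omega

theorem coreLabel_injOn {j j' : ℕ} (hj : j < s) (hj' : j' < s)
    (h : coreLabel s j = coreLabel s j') : j = j' := by
  unfold coreLabel at h; split_ifs at h <;> omega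

theorem coreLabel_add_coreLabel_succ (j : ℕ) :
    coreLabel s j + coreLabel s (j + 1) = s / 2 + 6 + j := by
  unfold coreLabel; split_ifs <;> omega

theorem coreLabel_sub_one (hs : 0 < s) :
    coreLabel s (s - 1) = if s % 2 = 0 then s / 2 else s + 4 := by
  unfold coreLabel; split_ifs <;> omega

theorem dsLabel_injective : Injective (dsLabel s) := by
  rintro (j | i | i) (j' | i' | i') h <;>
    simp only [dsLabel, Sum.inl.injEq, Sum.inr.injEq, reduceCtorEq, Fin.ext_iff] at h ⊢
  · exact coreLabel_injOn s j.isLt j'.isLt h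
  all_goals
    (try have := coreLabel_small_or_large s j.isLt)
    (try have := coreLabel_small_or_large s j'.isLt)
    omega

theorem dsLabel_mem (k : Fin s ⊕ Fin 2 ⊕ Fin 2) :
    dsLabel s k ∈ Set.Icc 1 (Fintype.card (Fin s ⊕ Fin 2 ⊕ Fin 2)) := by
  simp only [Fintype.card_sum, Fintype.card_fin, Set.mem_Icc]
  rcases k with j | i | i
  · have := coreLabel_small_or_large s j.isLt
    simp only [dsLabel]
    omega
  all_goals simp only [dsLabel]; omega

def dsVertexSum : DSVert s [1, 1] [1, 1] → ℕ
  | .inl a =>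
    if (a : ℕ) = 0 then 3 * (s / 2) + 9
    else if (a : ℕ) = s then coreLabel s (s - 1) + 2 * (s / 2) + 6
    else s / 2 + 5 + a
  | .inr (.inl p) => s / 2 + 1 + 2 * p.1
  | .inr (.inr p) => s / 2 + 2 + 2 * p.1

def dsDegree : DSVert s [1, 1] [1, 1] → ℕ
  | .inl a => if (a : ℕ) = 0 ∨ (a : ℕ) = s then 3 else 2
  | .inr _ => 1

theorem sum_filter_mem_dsEdge (hs : 0 < s) (u : DSVert s [1, 1] [1, 1]) :
    ∑ k with u ∈ dsEdge s k, dsLabel s k = dsVertexSum s u := by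
  cases u using dsVertex_cases s with
  | zero =>
    simp only [filter_mem_dsEdge_inl_zero s hs, dsLabel, coreLabel, dsVertexSum, mem_insert,
      mem_singleton, reduceCtorEq, Sum.inr.injEq, Sum.inl.injEq, zero_ne_one, or_self,
      not_false_eq_true, sum_insert, sum_singleton, Fin.isValue, Fin.val_zero, Fin.val_one,
      Nat.zero_mod, Nat.zero_div, ↓reduceIte, mul_zero, mul_one, add_zero]
    omega
  | last =>
    simp only [filter_mem_dsEdge_inl_last s hs, dsLabel, dsVertexSum, mem_insert, mem_singleton,
      reduceCtorEq, Sum.inr.injEq, zero_ne_one, or_self, not_false_eq_true, sum_insert,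
      sum_singleton, Fin.isValue, Fin.val_zero, Fin.val_one, Fin.val_last, hs.ne', ↓reduceIte,
      mul_zero, mul_one, add_zero]
    omega
  | interior a h0 h1 =>
    rw [filter_mem_dsEdge_inl_of_pos_of_lt s a h0 h1, sum_pair (by simp; omega)]
    have := coreLabel_add_coreLabel_succ s (a - 1)
    rw [Nat.sub_add_cancel h0] at this
    simp only [dsLabel, dsVertexSum]
    split_ifs <;> omega
  | leafL i => rw [filter_mem_dsEdge_inr_inl, sum_singleton]; rfl
  | leafR i => rw [filter_mem_dsEdge_inr_inr, sum_singleton]; rfl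

theorem card_filter_mem_dsEdge (hs : 0 < s) (u : DSVert s [1, 1] [1, 1]) :
    #{k | u ∈ dsEdge s k} = dsDegree s u := by
  cases u using dsVertex_cases s with
  | zero => simp [filter_mem_dsEdge_inl_zero s hs, dsDegree]
  | last => simp [filter_mem_dsEdge_inl_last s hs, dsDegree]
  | interior a h0 h1 =>
    rw [filter_mem_dsEdge_inl_of_pos_of_lt s a h0 h1, card_pair (by simp; omega)]
    simp only [dsDegree]
    split_ifs <;> omega
  | leafL i => rw [filter_mem_dsEdge_inr_inl, card_singleton]; rfl
  | leafR i => rw [filter_mem_dsEdge_inr_inr, card_singleton]; rfl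

theorem dsVertexSum_injective (hs : 0 < s) : Injective (dsVertexSum s) := by
  -- rewriting `[1, 1].length` to `2` lets `omega` see the bound on the leg indices
  rintro (a | p | p) (b | q | q) h <;>
    simp only [dsVertexSum, coreLabel_sub_one s hs, List.length_cons, List.length_nil,
      Nat.reduceAdd] at h
  case inl.inl => exact congrArg Sum.inl (Fin.ext (by split_ifs at h <;> omega))
  case inr.inl.inr.inl => rw [← legVertex_fst p, ← legVertex_fst q, show p.1 = q.1 by omega]
  case inr.inr.inr.inr => rw [← legVertex_fst p, ← legVertex_fst q, show p.1 = q.1 by omega]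
  all_goals (try split_ifs at h) <;> omega

theorem dsVertexSum_lt_of_dsDegree_lt (hs : 0 < s) {u v : DSVert s [1, 1] [1, 1]}
    (h : dsDegree s u < dsDegree s v) : dsVertexSum s u < dsVertexSum s v := by
  rcases u with a | p | p <;> rcases v with b | q | q <;>
    simp only [dsDegree, dsVertexSum, coreLabel_sub_one s hs, List.length_cons, List.length_nil,
      Nat.reduceAdd] at h ⊢ <;>
    (try split_ifs at h ⊢) <;> omega

end DoubleSpiderTwoTwo

/-- For every integer `s ≥ 1`, the double spider whose set `L` consists
of two paths of length 1, whose set `R` consists of two paths of length 1, and whose core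
path has length `s` (so both branch vertices have degree 3 and the tree has `s + 4` edges)
is strongly antimagic. -/
theorem doubleSpider_two_two_isStronglyAntimagic (s : ℕ) (hs : 1 ≤ s) :
    IsStronglyAntimagic (DoubleSpider s [1, 1] [1, 1]) := by
  refine isStronglyAntimagic_of_edge_enumeration (dsEdge_injective s) (range_dsEdge s)
    (dsLabel s) (dsLabel_injective s) (dsLabel_mem s) ?_ fun u v h => ?_
  · simpa only [sum_filter_mem_dsEdge s hs] using dsVertexSum_injective s hs
  · simp only [sum_filter_mem_dsEdge s hs, card_filter_mem_dsEdge s hs] at h ⊢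
    exact dsVertexSum_lt_of_dsDegree_lt s hs h

end
end
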